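/- arXiv:1201.6217 — 3 statements merged into one kernel-verified Lean document; each statement's English description precedes it below -/
import Mathlib

section
/- The 4×4 symmetric matrix with zero diagonal, entries A(1,2) = A(2,1) = √3, A(3,4) = A(4,3) = √3, A(2,4) = A(4,2) = 1, A(1,3) = A(3,1) = −1, and all other entries 0, has characteristic polynomial (x² − 4)² and hence all eigenvalues ±2 and integer characteristic polynomial. -/
open Polynomial

/-!
For a weighted 4-cycle `1 - 2 - 4 - 3 - 1` with weights `a, b, c, d` the characteristic polynomial
is `X⁴ - (a² + b² + c² + d²) X² + (a d - b c)²`. With weights `√3, -1, 1, √3` this is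
`X⁴ - 8 X² + 16 = (X² - 4)²`, whose roots, and hence the eigenvalues, are `±2`.
-/
theorem Matrix.charpoly_weighted_fourCycle {R : Type*} [CommRing R] (a b c d : R) :
    (!![0, a, b, 0; a, 0, 0, c; b, 0, 0, d; 0, c, d, 0]).charpoly =
      X ^ 4 - C (a ^ 2 + b ^ 2 + c ^ 2 + d ^ 2) * X ^ 2 + C ((a * d - b * c) ^ 2) := by
  simp only [Matrix.charpoly, Matrix.det_succ_row_zero, Fin.sum_univ_succ, Fin.sum_univ_zero,
    Matrix.det_fin_zero, Matrix.charmatrix_apply, Matrix.submatrix_apply]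
  simp [Fin.succAbove, Fin.lt_def]
  ring

theorem Matrix.spectrum_subset_of_charpoly_eq {n K : Type*} [Fintype n] [DecidableEq n] [Field K]
    {A : Matrix n n K} {p : K[X]} (h : A.charpoly = p) : spectrum K A ⊆ {μ | p.IsRoot μ} :=
  fun _ hμ ↦ h ▸ Matrix.mem_spectrum_iff_isRoot_charpoly.mp hμ

theorem Polynomial.exists_int_coeff_eq_of_eq_map {R : Type*} [Ring R] {p : R[X]} {q : ℤ[X]}
    (h : p = q.map (Int.castRingHom R)) (k : ℕ) : ∃ m : ℤ, p.coeff k = m :=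
  ⟨q.coeff k, by simp [h]⟩

/-- The adjacency matrix of the sporadic maximal cyclotomic `ℤ[√3]`-graph `S₄^(√3)` has
characteristic polynomial `(x² - 4)²`, hence all eigenvalues `±2` and integer
characteristic polynomial. -/
theorem stmt15 :
    (!![(0 : ℝ), Real.sqrt 3, -1, 0;
        Real.sqrt 3, 0, 0, 1;
        -1, 0, 0, Real.sqrt 3;
        0, 1, Real.sqrt 3, 0]).charpoly = (X ^ 2 - C 4) ^ 2 ∧
    spectrum ℝ (!![(0 : ℝ), Real.sqrt 3, -1, 0;
        Real.sqrt 3, 0, 0, 1;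
        -1, 0, 0, Real.sqrt 3;
        0, 1, Real.sqrt 3, 0]) ⊆ {-2, 2} ∧
    (∀ k, ∃ m : ℤ, (!![(0 : ℝ), Real.sqrt 3, -1, 0;
        Real.sqrt 3, 0, 0, 1;
        -1, 0, 0, Real.sqrt 3;
        0, 1, Real.sqrt 3, 0]).charpoly.coeff k = (m : ℝ)) := by
  have hcharpoly : (!![(0 : ℝ), Real.sqrt 3, -1, 0;
      Real.sqrt 3, 0, 0, 1;
      -1, 0, 0, Real.sqrt 3;
      0, 1, Real.sqrt 3, 0]).charpoly = (X ^ 2 - C 4) ^ 2 := by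
    have hsqrt : Real.sqrt 3 ^ 2 = 3 := Real.sq_sqrt (by norm_num)
    have hsum : Real.sqrt 3 ^ 2 + (-1) ^ 2 + 1 ^ 2 + Real.sqrt 3 ^ 2 = 8 := by rw [hsqrt]; norm_num
    have hdet : (Real.sqrt 3 * Real.sqrt 3 - (-1) * 1) ^ 2 = 16 := by
      rw [← sq, hsqrt]; norm_num
    rw [Matrix.charpoly_weighted_fourCycle, hsum, hdet]
    simp only [map_ofNat]
    ring
  refine ⟨hcharpoly, fun μ hμ ↦ ?_,
    Polynomial.exists_int_coeff_eq_of_eq_map (q := (X ^ 2 - C 4) ^ 2)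
      (by simp [hcharpoly, map_ofNat C 4])⟩
  have hroot : (μ ^ 2 - 4) ^ 2 = 0 := by
    simpa using Matrix.spectrum_subset_of_charpoly_eq hcharpoly hμ
  have hfactor : (μ + 2) * (μ - 2) = 0 := by
    linear_combination (pow_eq_zero_iff two_ne_zero).mp hroot
  simp only [Set.mem_insert_iff, Set.mem_singleton_iff]
  rcases mul_eq_zero.mp hfactor with h | h
  · exact .inl (by linarith)
  · exact .inr (by linarith)
end

section
/- Let φ = (1+√5)/2 and φ̄ = (1−√5)/2. The 3×3 symmetric matrix A with diagonal (φ, φ̄, 1), A(1,2) = A(2,1) = 1, A(1,3) = A(3,1) = φ̄, A(2,3) = A(3,2) = φ, has characteristic polynomial with integer coefficients and all eigenvalues in [−2,2]. -/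
open Polynomial Matrix in
private lemma stmt18_charpoly (φ φ' : ℝ) (hφ : φ = (1 + Real.sqrt 5) / 2)
    (hφ' : φ' = (1 - Real.sqrt 5) / 2) :
    (!![φ, 1, φ'; 1, φ', φ; φ', φ, 1]).charpoly
      = X ^ 3 - C 2 * X ^ 2 - C 4 * X + C 8 := by
  have hs : Real.sqrt 5 ^ 2 = 5 := Real.sq_sqrt (by norm_num)
  rw [Matrix.charpoly, Matrix.det_fin_three]
  simp [charmatrix_apply, Matrix.diagonal_apply]
  apply Polynomial.funext
  intro x
  simp only [hφ, hφ', eval_add, eval_sub, eval_mul, eval_neg, eval_pow, eval_X, eval_C,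
    eval_zero, eval_one, eval_ofNat]
  linear_combination (-3 * x / 4 + 3 / 2) * hs

open Polynomial Matrix in
/-- With `φ = (1+√5)/2` and `φ̄ = (1-√5)/2`, the adjacency matrix of the sporadic maximal
cyclotomic `ℤ[φ]`-graph `S₃` has integer characteristic polynomial and all eigenvalues
in `[-2, 2]`. -/
theorem stmt18 (φ φ' : ℝ) (hφ : φ = (1 + Real.sqrt 5) / 2) (hφ' : φ' = (1 - Real.sqrt 5) / 2) :
    (∀ k, ∃ m : ℤ, (!![φ, 1, φ'; 1, φ', φ; φ', φ, 1]).charpoly.coeff k = (m : ℝ)) ∧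
    ∀ μ ∈ spectrum ℝ (!![φ, 1, φ'; 1, φ', φ; φ', φ, 1]), μ ∈ Set.Icc (-2 : ℝ) 2 := by
  set A : Matrix (Fin 3) (Fin 3) ℝ := !![φ, 1, φ'; 1, φ', φ; φ', φ, 1] with hA
  have hP : A.charpoly = X ^ 3 - C 2 * X ^ 2 - C 4 * X + C 8 :=
    stmt18_charpoly φ φ' hφ hφ'
  have hP2 : A.charpoly
      = ((X ^ 3 - C 2 * X ^ 2 - C 4 * X + C 8 : ℤ[X])).map (Int.castRingHom ℝ) := by
    rw [hP]; push_cast [Polynomial.map_add, Polynomial.map_sub, Polynomial.map_mul,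
      Polynomial.map_pow, Polynomial.map_X, Polynomial.map_C]; norm_num
  constructor
  · intro k
    refine ⟨((X ^ 3 - C 2 * X ^ 2 - C 4 * X + C 8 : ℤ[X])).coeff k, ?_⟩
    rw [hP2, Polynomial.coeff_map]
    simp
  · intro μ hμ
    -- eval of charpoly at μ equals det (algebraMap μ - A)
    have hdet : A.charpoly.eval μ = (algebraMap ℝ (Matrix (Fin 3) (Fin 3) ℝ) μ - A).det := by
      rw [Matrix.charpoly, ← Polynomial.coe_evalRingHom, RingHom.map_det]
      congr 1
      ext i j
      by_cases h : i = j <;>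
        simp [charmatrix_apply, Matrix.algebraMap_matrix_apply, h, Matrix.diagonal_apply]
    have hzero : A.charpoly.eval μ = 0 := by
      by_contra hne
      exact (spectrum.mem_iff.mp hμ)
        ((Matrix.isUnit_iff_isUnit_det _).mpr (isUnit_iff_ne_zero.mpr (hdet ▸ hne)))
    have hfac : (μ - 2) ^ 2 * (μ + 2) = 0 := by
      have := hzero
      rw [hP] at this
      simp only [eval_add, eval_sub, eval_mul, eval_pow, eval_X, eval_C] at this
      linear_combination this
    rcases mul_eq_zero.mp hfac with h | h
    · have : μ = 2 := by
        have := pow_eq_zero_iff (n := 2) (by norm_num) |>.mp h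
        linarith [sub_eq_zero.mp this]
      simp [this]
    · have : μ = -2 := by linarith
      simp [this]
end

section
/- Let A be an n×n symmetric matrix over Z[√2] whose associated weighted graph is connected, all of whose diagonal entries lie in Z, and all of whose eigenvalues together with those of its Galois conjugate σ(A) lie in [−2, 2], where σ sends √2 to −√2 entrywise. If every cycle of the underlying graph contains an even number of edges of weight ±√2, then A is switch-equivalent to σ(A), i.e., there is a diagonal ±1 matrix D and a permutation matrix P such that σ(A) = (DP) A (DP)ᵀ, and consequently the characteristic polynomial of A has integer coefficients. -/
/-!
The entries of a real symmetric matrix are bounded by its spectral radius, so every entry `z` of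
`A` satisfies `|z| ≤ 2` and `|σ z| ≤ 2`; in `ℤ[√2]` this forces `z ∈ ℤ` or `z = ±√2`. Hence `σ(A)`
is `A` with exactly its `±√2`-edges negated. Give those edges the sign `-1` and the others `+1`.
The cycle condition says that every cycle has sign product `1`, hence so does every closed walk
(cut it at a repeated vertex), and by connectivity the edge signs are `εᵢ εⱼ` for a vertex signing
`ε`. Thus `σ(A) = D A D` with `D = diag ε`, so `A` and `σ(A)` have the same characteristic
polynomial, whose coefficients in `ℤ[√2]` are therefore fixed by `σ`, i.e. integers.
-/

open Matrix Finset

section Walks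

variable {V G : Type*} [CommGroup G]

def IsWalkSeq (adj : V → V → Prop) (c : ℕ → V) (k : ℕ) : Prop :=
  ∀ l < k, adj (c l) (c (l + 1))

def walkSeqProd (t : V → V → G) (c : ℕ → V) (k : ℕ) : G :=
  ∏ l ∈ range k, t (c l) (c (l + 1))

def walkSeqAppend (c : ℕ → V) (k : ℕ) (d : ℕ → V) : ℕ → V :=
  fun m => if m ≤ k then c m else d (m - k)

theorem walkSeqProd_add (t : V → V → G) (c : ℕ → V) (k m : ℕ) :
    walkSeqProd t c (k + m) = walkSeqProd t c k * walkSeqProd t (fun l => c (k + l)) m := by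
  simp only [walkSeqProd, prod_range_add, add_assoc]

theorem walkSeqAppend_of_le (c d : ℕ → V) {k m : ℕ} (hm : m ≤ k) :
    walkSeqAppend c k d m = c m := if_pos hm

theorem walkSeqAppend_add {c d : ℕ → V} {k : ℕ} (h : c k = d 0) (m : ℕ) :
    walkSeqAppend c k d (k + m) = d m := by
  rcases m.eq_zero_or_pos with rfl | hm
  · simp [walkSeqAppend, h]
  · simp [walkSeqAppend, hm.ne']

theorem walkSeqProd_append (t : V → V → G) {c d : ℕ → V} {k : ℕ} (h : c k = d 0) (m : ℕ) :
    walkSeqProd t (walkSeqAppend c k d) (k + m) = walkSeqProd t c k * walkSeqProd t d m := by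
  rw [walkSeqProd_add]
  congr 1
  · refine prod_congr rfl fun l hl => ?_
    have hl : l < k := mem_range.mp hl
    rw [walkSeqAppend_of_le _ _ hl.le, walkSeqAppend_of_le _ _ hl]
  · simp only [walkSeqProd, walkSeqAppend_add h]

theorem IsWalkSeq.append {adj : V → V → Prop} {c d : ℕ → V} {k m : ℕ} (hc : IsWalkSeq adj c k)
    (hd : IsWalkSeq adj d m) (h : c k = d 0) : IsWalkSeq adj (walkSeqAppend c k d) (k + m) := by
  intro l hl
  rcases lt_or_ge l k with hlk | hlk
  · rw [walkSeqAppend_of_le _ _ hlk.le, walkSeqAppend_of_le _ _ hlk]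
    exact hc l hlk
  · obtain ⟨l, rfl⟩ := Nat.exists_eq_add_of_le hlk
    rw [add_assoc, walkSeqAppend_add h, walkSeqAppend_add h]
    exact hd l (by omega)

theorem walkSeqProd_reverse {t : V → V → G} (ht : ∀ i j, t j i = (t i j)⁻¹) (c : ℕ → V)
    (k : ℕ) : walkSeqProd t (fun m => c (k - m)) k = (walkSeqProd t c k)⁻¹ := by
  rw [walkSeqProd, ← prod_range_reflect, walkSeqProd, ← prod_inv_distrib]
  refine prod_congr rfl fun l hl => ?_
  have hl : l < k := mem_range.mp hl
  rw [show k - (k - 1 - l) = l + 1 by omega, show k - (k - 1 - l + 1) = l by omega, ht]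

theorem IsWalkSeq.reverse {adj : V → V → Prop} (hadj : ∀ i j, adj i j → adj j i)
    {c : ℕ → V} {k : ℕ} (hc : IsWalkSeq adj c k) : IsWalkSeq adj (fun m => c (k - m)) k := by
  intro l hl
  have := hc (k - 1 - l) (by omega)
  rw [show k - 1 - l + 1 = k - l by omega, show k - 1 - l = k - (l + 1) by omega] at this
  exact hadj _ _ this

theorem exists_isWalkSeq_of_fin {adj : V → V → Prop} {k : ℕ} (c : Fin (k + 1) → V)
    (hc : ∀ l : Fin k, adj (c l.castSucc) (c l.succ)) :
    ∃ c' : ℕ → V, c' 0 = c 0 ∧ c' k = c (Fin.last k) ∧ IsWalkSeq adj c' k := by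
  refine ⟨fun m => c (Fin.clamp m k), congrArg c (Fin.ext (by simp [Fin.clamp])),
    congrArg c (Fin.ext (by simp [Fin.clamp])), fun l hl => ?_⟩
  convert hc ⟨l, hl⟩ using 2 <;> ext <;> simp [Fin.clamp] <;> omega

theorem walkSeqProd_eq_one_of_closed {adj : V → V → Prop} {t : V → V → G}
    (ht : ∀ i j, t j i = (t i j)⁻¹) (hdiag : ∀ i, t i i = 1)
    (hcycle : ∀ k, 3 ≤ k → ∀ c : ℕ → V, c 0 = c k → (∀ l₁ l₂, l₁ < l₂ → l₂ < k → c l₁ ≠ c l₂) →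
      IsWalkSeq adj c k → walkSeqProd t c k = 1)
    (k : ℕ) (c : ℕ → V) (hc : c 0 = c k) (hwalk : IsWalkSeq adj c k) :
    walkSeqProd t c k = 1 := by
  induction k using Nat.strong_induction_on generalizing c with
  | _ k ih =>
  by_cases hsimple : ∀ l₁ l₂, l₁ < l₂ → l₂ < k → c l₁ ≠ c l₂
  · match k, hc, hsimple with
    | 0, _, _ => rfl
    | 1, hc, _ => simp [walkSeqProd, ← hc, hdiag]
    | 2, hc, _ => simp [walkSeqProd, prod_range_succ, ← hc, ht (c 0) (c 1)]
    | k + 3, hc, hsimple => exact hcycle _ (by omega) c hc hsimple hwalk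
  -- Cut out the closed subwalk between two visits of the same vertex.
  push Not at hsimple
  obtain ⟨l₁, l₂, hl, hlk, hrep⟩ := hsimple
  obtain ⟨d, rfl⟩ := Nat.exists_eq_add_of_lt hl
  obtain ⟨e, rfl⟩ := Nat.exists_eq_add_of_lt hlk
  set inner : ℕ → V := fun m => c (l₁ + m)
  set outer := walkSeqAppend c l₁ fun m => c (l₁ + d + 1 + m)
  have hinner : walkSeqProd t inner (d + 1) = 1 := by
    refine ih _ (by omega) _ (by simpa [inner, add_assoc] using hrep) fun l hl => ?_
    simpa [inner, add_assoc] using hwalk (l₁ + l) (by omega)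
  have houter : walkSeqProd t outer (l₁ + (e + 1)) = 1 := by
    refine ih _ (by omega) _ ?_ (IsWalkSeq.append (fun l hl => hwalk l (by omega)) ?_ ?_)
    · simp [outer, walkSeqAppend, hc, add_assoc]
    · intro l hl
      simpa [add_assoc] using hwalk (l₁ + d + 1 + l) (by omega)
    · simpa using hrep
  calc walkSeqProd t c (l₁ + d + 1 + e + 1)
      = walkSeqProd t c l₁ * walkSeqProd t inner (d + 1) *
          walkSeqProd t (fun m => c (l₁ + d + 1 + m)) (e + 1) := by
        rw [show l₁ + d + 1 + e + 1 = l₁ + (d + 1) + (e + 1) by omega, walkSeqProd_add,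
          walkSeqProd_add, add_assoc l₁ d 1]
    _ = walkSeqProd t outer (l₁ + (e + 1)) * walkSeqProd t inner (d + 1) := by
        rw [walkSeqProd_append t (by simpa using hrep), mul_right_comm]
    _ = 1 := by rw [hinner, houter, one_mul]

theorem exists_potential_of_walkSeqProd_eq_one {adj : V → V → Prop}
    (hadj : ∀ i j, adj i j → adj j i) {t : V → V → G} (ht : ∀ i j, t j i = (t i j)⁻¹)
    (hconn : ∀ i j, ∃ k, ∃ c : ℕ → V, c 0 = i ∧ c k = j ∧ IsWalkSeq adj c k)
    (hclosed : ∀ k c, c 0 = c k → IsWalkSeq adj c k → walkSeqProd t c k = 1) :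
    ∃ f : V → G, ∀ i j, adj i j → t i j = (f i)⁻¹ * f j := by
  rcases isEmpty_or_nonempty V with hV | ⟨⟨root⟩⟩
  · exact ⟨1, fun i => isEmptyElim i⟩
  choose K c hc0 hcK hwalk using hconn root
  refine ⟨fun j => walkSeqProd t (c j) (K j), fun i j hij => ?_⟩
  set edge : ℕ → V := fun m => if m = 0 then i else j
  have hedge : IsWalkSeq adj edge 1 := fun l hl => by simpa [edge, Nat.lt_one_iff.mp hl] using hij
  have hi : c i (K i) = edge 0 := by simp [edge, hcK]
  have hj : walkSeqAppend (c i) (K i) edge (K i + 1) = c j (K j - 0) := by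
    simp [walkSeqAppend_add hi, edge, hcK]
  have hloop := hclosed _ _ ?_ (((hwalk i).append hedge hi).append ((hwalk j).reverse hadj) hj)
  · rw [walkSeqProd_append t hj, walkSeqProd_append t hi, walkSeqProd_reverse ht] at hloop
    simp only [walkSeqProd, range_one, prod_singleton, edge] at hloop ⊢
    simpa [mul_inv_eq_one, eq_inv_mul_iff_mul_eq] using hloop
  · rw [walkSeqAppend_add hj, walkSeqAppend_of_le _ _ (Nat.zero_le _),
      walkSeqAppend_of_le _ _ (Nat.zero_le _), hc0, Nat.sub_self, hc0]

end Walks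

theorem Matrix.IsHermitian.abs_apply_le {ι : Type*} [Fintype ι] [DecidableEq ι]
    {A : Matrix ι ι ℝ} (hA : A.IsHermitian) {r : ℝ} (hr : spectrum ℝ A ⊆ Set.Icc (-r) r)
    (i j : ι) : |A i j| ≤ r := by
  set U : Matrix ι ι ℝ := (hA.eigenvectorUnitary : Matrix ι ι ℝ)
  have hstar : star U = Uᵀ := by rw [star_eq_conjTranspose, conjTranspose_eq_transpose_of_trivial]
  have hentry : A i j = ∑ k, hA.eigenvalues k * (U i k * U j k) := by
    have hspec : A = U * diagonal (RCLike.ofReal ∘ hA.eigenvalues) * star U :=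
      hA.spectral_theorem
    conv_lhs => rw [hspec]
    rw [hstar, mul_apply]
    refine sum_congr rfl fun k _ => ?_
    simp only [mul_diagonal, transpose_apply, Function.comp_apply, RCLike.ofReal_real_eq_id, id_eq]
    ring
  have hrow : ∀ i, ∑ k, U i k ^ 2 = 1 := fun i => by
    have hUU : U * star U = 1 := Matrix.mem_unitaryGroup_iff.mp hA.eigenvectorUnitary.2
    have := congr_fun₂ hUU i i
    simpa only [mul_apply, hstar, sq, transpose_apply, one_apply_eq] using this
  have heig (k) : |hA.eigenvalues k| ≤ r := abs_le.mpr (hr (hA.eigenvalues_mem_spectrum_real k))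
  calc |A i j| ≤ ∑ k, |hA.eigenvalues k| * |U i k * U j k| := by
        rw [hentry]; exact (abs_sum_le_sum_abs _ _).trans_eq (by simp [abs_mul])
    _ ≤ ∑ k, r * ((U i k ^ 2 + U j k ^ 2) / 2) := by
        refine sum_le_sum fun k _ => mul_le_mul (heig k) ?_ (abs_nonneg _)
          ((abs_nonneg _).trans (heig k))
        rw [abs_mul]
        nlinarith [sq_nonneg (|U i k| - |U j k|), sq_abs (U i k), sq_abs (U j k)]
    _ = r := by rw [← mul_sum, ← sum_div, sum_add_distrib, hrow, hrow]; ring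

local notation "toℝ" => Zsqrtd.toReal (d := 2) zero_le_two

-- `√2 ↦ -√2` followed by `toℝ`, so that `B.map toℝσ` is `σ(B.map toℝ)`
local notation "toℝσ" => RingHom.comp (Zsqrtd.toReal (d := 2) zero_le_two) (starRingEnd (ℤ√2))

theorem Zsqrtd.toReal_two_injective : Function.Injective toℝ :=
  Zsqrtd.toReal_injective _ fun n h => by
    have : n ≤ 2 := by nlinarith
    have : -2 ≤ n := by nlinarith
    interval_cases n <;> omega

theorem Zsqrtd.toReal_two_star (z : ℤ√2) : toℝ (star z) = z.re - z.im * √2 := by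
  simp [Zsqrtd.toReal_apply, sub_eq_add_neg]

theorem Zsqrtd.im_eq_zero_or_of_abs_toReal_le_two {z : ℤ√2} (h : |toℝ z| ≤ 2)
    (hσ : |toℝ (star z)| ≤ 2) : z.im = 0 ∨ z.re = 0 ∧ (z.im = 1 ∨ z.im = -1) := by
  rw [Zsqrtd.toReal_two_star, abs_le] at hσ
  rw [Zsqrtd.toReal_apply, abs_le] at h
  have hs : √2 * √2 = 2 := Real.mul_self_sqrt zero_le_two
  have hs1 : 1.4 < √2 := by nlinarith [Real.sqrt_nonneg 2]
  have hs2 : √2 < 1.5 := by nlinarith [Real.sqrt_nonneg 2]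
  have him : |(z.im : ℝ)| < 2 := by rw [abs_lt]; push_cast at h hσ; constructor <;> nlinarith
  have him' : |z.im| ≤ 1 := by rw [← Int.lt_add_one_iff]; exact_mod_cast him
  obtain him0 | him1 : z.im = 0 ∨ z.im = 1 ∨ z.im = -1 := by rw [abs_le] at him'; omega
  · exact .inl him0
  refine .inr ⟨?_, him1⟩
  have hre : |(z.re : ℝ)| < 1 := by
    rw [abs_lt]; rcases him1 with h1 | h1 <;> simp only [h1] at h hσ <;> push_cast at h hσ <;>
      constructor <;> linarith
  have : |z.re| < 1 := by exact_mod_cast hre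
  rw [abs_lt] at this; omega

noncomputable def sqrtTwoSign (x : ℝ) : ℤˣ := if x = √2 ∨ x = -√2 then -1 else 1

theorem sqrtTwoSign_intCast (m : ℤ) : sqrtTwoSign m = 1 :=
  if_neg fun h => h.elim (irrational_sqrt_two.ne_int m ·.symm)
    (irrational_sqrt_two.neg.ne_int m ·.symm)

theorem Zsqrtd.toReal_two_star_eq_sqrtTwoSign_mul {z : ℤ√2} (h : |toℝ z| ≤ 2)
    (hσ : |toℝ (star z)| ≤ 2) : toℝ (star z) = ((sqrtTwoSign (toℝ z) : ℤ) : ℝ) * toℝ z := by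
  rcases Zsqrtd.im_eq_zero_or_of_abs_toReal_le_two h hσ with him | ⟨hre, him | him⟩
  · simp [Zsqrtd.toReal_apply, him, sqrtTwoSign_intCast]
  · simp [Zsqrtd.toReal_apply, him, hre, sqrtTwoSign]
  · simp [Zsqrtd.toReal_apply, him, hre, sqrtTwoSign]

theorem Zsqrtd.map_conj_apply_eq_sqrtTwoSign_mul {ι : Type*} [Fintype ι] [DecidableEq ι]
    {B : Matrix ι ι (ℤ√2)} (hB : B.IsSymm) (h : spectrum ℝ (B.map toℝ) ⊆ Set.Icc (-2) 2)
    (hσ : spectrum ℝ (B.map toℝσ) ⊆ Set.Icc (-2) 2) (i j : ι) :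
    B.map toℝσ i j = ((sqrtTwoSign (B.map toℝ i j) : ℤ) : ℝ) * B.map toℝ i j :=
  Zsqrtd.toReal_two_star_eq_sqrtTwoSign_mul
    ((isHermitian_iff_isSymm.mpr (hB.map _)).abs_apply_le h i j)
    ((isHermitian_iff_isSymm.mpr (hB.map _)).abs_apply_le hσ i j)

def SqrtTwoCyclesEven {V : Type*} (A : Matrix V V ℝ) : Prop :=
  ∀ (k : ℕ) (c : Fin (k + 1) → V), 3 ≤ k → c 0 = c (Fin.last k) →
    Function.Injective (fun l : Fin k => c l.castSucc) →
    (∀ l : Fin k, A (c l.castSucc) (c l.succ) ≠ 0) →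
    Even (Nat.card {l : Fin k // A (c l.castSucc) (c l.succ) = √2 ∨
      A (c l.castSucc) (c l.succ) = -√2})

theorem walkSeqProd_sqrtTwoSign_eq_one {V : Type*} (A : Matrix V V ℝ)
    (hcyc : SqrtTwoCyclesEven A)
    (k : ℕ) (hk : 3 ≤ k) (c : ℕ → V) (hc : c 0 = c k)
    (hsimple : ∀ l₁ l₂, l₁ < l₂ → l₂ < k → c l₁ ≠ c l₂) (hwalk : IsWalkSeq (A · · ≠ 0) c k) :
    walkSeqProd (fun i j => sqrtTwoSign (A i j)) c k = 1 := by
  have heven := hcyc k (fun l => c l) hk hc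
    (fun l₁ l₂ h => Fin.ext <| by
      by_contra hne
      rcases lt_or_gt_of_ne hne with hlt | hlt
      exacts [hsimple _ _ hlt l₂.isLt h, hsimple _ _ hlt l₁.isLt h.symm])
    (fun l => hwalk l l.isLt)
  rw [Nat.card_eq_fintype_card, Fintype.card_subtype] at heven
  simp only [walkSeqProd, ← Fin.prod_univ_eq_prod_range, sqrtTwoSign]
  rw [prod_ite, prod_const, prod_const_one, mul_one]
  exact heven.neg_one_pow

theorem exists_units_sqrtTwoSign_mul_eq {V : Type*} {A : Matrix V V ℝ} (hsym : A.IsSymm)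
    (hdiag : ∀ i, sqrtTwoSign (A i i) = 1)
    (hconn : ∀ i j : V, ∃ (k : ℕ) (c : Fin (k + 1) → V),
      c 0 = i ∧ c (Fin.last k) = j ∧ ∀ l : Fin k, A (c l.castSucc) (c l.succ) ≠ 0)
    (hcyc : SqrtTwoCyclesEven A) :
    ∃ ε : V → ℤˣ, ∀ i j,
      ((sqrtTwoSign (A i j) : ℤ) : ℝ) * A i j = ((ε i : ℤ) : ℝ) * A i j * ((ε j : ℤ) : ℝ) := by
  have hinv (i j) : sqrtTwoSign (A j i) = (sqrtTwoSign (A i j))⁻¹ := by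
    rw [hsym.apply, Int.units_inv_eq_self]
  obtain ⟨ε, hε⟩ := exists_potential_of_walkSeqProd_eq_one (adj := (A · · ≠ 0))
    (fun i j h => hsym.apply i j ▸ h) hinv
    (fun i j => by
      obtain ⟨k, c, rfl, rfl, hc⟩ := hconn i j
      exact ⟨k, exists_isWalkSeq_of_fin c hc⟩)
    (walkSeqProd_eq_one_of_closed hinv hdiag (walkSeqProd_sqrtTwoSign_eq_one A hcyc))
  refine ⟨ε, fun i j => ?_⟩
  by_cases hA : A i j = 0
  · simp [hA]
  · rw [hε i j hA, Int.units_inv_eq_self]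
    push_cast
    ring

theorem Matrix.charpoly_mul_mul_of_mul_self_eq_one {R ι : Type*} [CommRing R] [Fintype ι]
    [DecidableEq ι] {D : Matrix ι ι R} (hD : D * D = 1) (M : Matrix ι ι R) :
    (D * M * D).charpoly = M.charpoly := by
  rw [charpoly_mul_comm, ← mul_assoc, hD, one_mul]

theorem Matrix.charpoly_diagonal_units_mul_mul {R ι : Type*} [CommRing R] [Fintype ι]
    [DecidableEq ι] (ε : ι → ℤˣ) (M : Matrix ι ι R) :
    (diagonal (fun i => ((ε i : ℤ) : R)) * M * diagonal (fun i => ((ε i : ℤ) : R))).charpoly =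
      M.charpoly := by
  refine charpoly_mul_mul_of_mul_self_eq_one ?_ M
  rw [diagonal_mul_diagonal, ← diagonal_one]
  congr 1
  ext i
  rw [← Int.cast_mul, ← Units.val_mul, Int.units_mul_self, Units.val_one, Int.cast_one]

theorem Zsqrtd.exists_int_coeff_charpoly {ι : Type*} [Fintype ι] [DecidableEq ι]
    (B : Matrix ι ι (ℤ√2))
    (h : (B.map toℝσ).charpoly = (B.map toℝ).charpoly) (k : ℕ) :
    ∃ m : ℤ, (B.map toℝ).charpoly.coeff k = m := by
  rw [charpoly_map, charpoly_map] at h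
  rw [charpoly_map]
  have hk := congr_arg (Polynomial.coeff · k) h
  simp only [Polynomial.coeff_map, RingHom.comp_apply] at hk ⊢
  set z := B.charpoly.coeff k
  have hz : star z = z := Zsqrtd.toReal_two_injective hk
  have him : z.im = 0 := by have := congr_arg Zsqrtd.im hz; simp at this; omega
  exact ⟨z.re, by simp [Zsqrtd.toReal_apply, him]⟩

/-- Let `A` be a connected symmetric matrix over `ℤ[√2]` (entries `a i j + b i j * √2`)
with integer diagonal entries, all of whose eigenvalues, together with those of its
entrywise Galois conjugate `σ(A)` (with `√2 ↦ -√2`), lie in `[-2, 2]`.  If every cycle of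
the underlying graph contains an even number of edges of weight `±√2`, then `A` is
switch-equivalent to `σ(A)`, i.e. `σ(A) = (D P) A (D P)ᵀ` for some diagonal `±1` matrix
`D` and permutation matrix `P`; consequently the characteristic polynomial of `A` has
integer coefficients. -/
theorem stmt19 (n : ℕ) (A : Matrix (Fin n) (Fin n) ℝ)
    (a b : Fin n → Fin n → ℤ)
    (hab : ∀ i j, A i j = (a i j : ℝ) + (b i j : ℝ) * Real.sqrt 2)
    (hsym : A.IsSymm)
    (hdiag : ∀ i, b i i = 0)
    (hspec : ∀ μ ∈ spectrum ℝ A, μ ∈ Set.Icc (-2 : ℝ) 2)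
    (hspecσ : ∀ μ ∈ spectrum ℝ
      (Matrix.of fun i j : Fin n => (a i j : ℝ) - (b i j : ℝ) * Real.sqrt 2),
      μ ∈ Set.Icc (-2 : ℝ) 2)
    (hconn : ∀ i j : Fin n, ∃ (k : ℕ) (c : Fin (k + 1) → Fin n),
      c 0 = i ∧ c (Fin.last k) = j ∧ ∀ l : Fin k, A (c l.castSucc) (c l.succ) ≠ 0)
    (hcyc : ∀ (k : ℕ) (c : Fin (k + 1) → Fin n), 3 ≤ k →
      c 0 = c (Fin.last k) →
      Function.Injective (fun l : Fin k => c l.castSucc) →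
      (∀ l : Fin k, A (c l.castSucc) (c l.succ) ≠ 0) →
      Even (Nat.card {l : Fin k // A (c l.castSucc) (c l.succ) = Real.sqrt 2 ∨
        A (c l.castSucc) (c l.succ) = -Real.sqrt 2})) :
    (∃ (ε : Fin n → ℝ) (p : Equiv.Perm (Fin n)),
      (∀ i, ε i = 1 ∨ ε i = -1) ∧
      (Matrix.of fun i j : Fin n => (a i j : ℝ) - (b i j : ℝ) * Real.sqrt 2) =
        (Matrix.diagonal ε * Matrix.of (fun i j : Fin n => if p i = j then (1 : ℝ) else 0))
          * A *
        (Matrix.diagonal ε * Matrix.of (fun i j : Fin n => if p i = j then (1 : ℝ) else 0))ᵀ) ∧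
    (∀ k, ∃ m : ℤ, A.charpoly.coeff k = (m : ℝ)) := by
  set B : Matrix (Fin n) (Fin n) (ℤ√2) := of fun i j => ⟨a i j, b i j⟩
  have hAB : A = B.map toℝ := by ext i j; simp [B, hab, Zsqrtd.toReal_apply]
  have hσB : (of fun i j => (a i j : ℝ) - (b i j : ℝ) * √2) = B.map toℝσ := by
    ext i j
    rw [map_apply, RingHom.comp_apply, starRingEnd_apply, Zsqrtd.toReal_two_star]
    rfl
  have hBsymm : B.IsSymm := IsSymm.ext fun i j => Zsqrtd.toReal_two_injective <| by
    simpa only [hAB, map_apply] using hsym.apply i j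
  obtain ⟨ε, hε⟩ := exists_units_sqrtTwoSign_mul_eq hsym
    (fun i => by rw [hab, hdiag, Int.cast_zero, zero_mul, add_zero, sqrtTwoSign_intCast]) hconn hcyc
  set D := diagonal fun i => ((ε i : ℤ) : ℝ)
  have hconj : B.map toℝσ = D * B.map toℝ * D := by
    ext i j
    rw [mul_diagonal, diagonal_mul, Zsqrtd.map_conj_apply_eq_sqrtTwoSign_mul hBsymm (by rwa [← hAB])
      (by rwa [← hσB]), ← hAB, hε]
  refine ⟨⟨fun i => ((ε i : ℤ) : ℝ), 1, fun i => ?_, ?_⟩, fun k => ?_⟩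
  · rcases Int.units_eq_one_or (ε i) with h | h <;> simp [h]
  · have hP : (of fun i j => if (1 : Equiv.Perm (Fin n)) i = j then (1 : ℝ) else 0) = 1 := by
      ext i j; simp only [of_apply, Equiv.Perm.coe_one, id_eq, one_apply]; congr
    rw [hσB, hconj, ← hAB, hP, mul_one, diagonal_transpose]
  · rw [hAB]
    exact Zsqrtd.exists_int_coeff_charpoly B (by rw [hconj, charpoly_diagonal_units_mul_mul]) k
end
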